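/- arXiv:2104.11871 — 2 statements merged into one kernel-verified Lean document; each statement's English description precedes it below -/
import Mathlib

section
/- Let T₁,…,T_K, R be Hermitian PSD matrices, h ∈ ℂ^N, Γ_i > 0, σ_i > 0. If (1 + 1/Γ_i) h^H T_i h ≥ h^H (Σ_{k=1}^K T_k + R) h + σ_i², and T̂_i = T_i + β_i R with β_i ≥ 0 and Σ_k β_k = 1, then (1 + 1/Γ_i) h^H T̂_i h ≥ h^H (Σ_{k=1}^K T̂_k) h + σ_i². -/
open Matrix
open scoped ComplexOrder

/-- Feasibility of the redistributed solution: if the Type-I SINR constraint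
`(1 + 1/Γᵢ) hᴴ Tᵢ h ≥ hᴴ (∑ₖ Tₖ + R) h + σᵢ²` holds, and `T̂ₖ = Tₖ + βₖ R` with
`βₖ ≥ 0`, `∑ₖ βₖ = 1`, then `(1 + 1/Γᵢ) hᴴ T̂ᵢ h ≥ hᴴ (∑ₖ T̂ₖ) h + σᵢ²`. -/
theorem stmt_5 {N K : ℕ} (T : Fin K → Matrix (Fin N) (Fin N) ℂ)
    (R : Matrix (Fin N) (Fin N) ℂ) (h : Fin N → ℂ) (i : Fin K)
    (Γ σ : ℝ) (hΓ : 0 < Γ) (hσ : 0 < σ)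
    (hT : ∀ k, (T k).PosSemidef) (hR : R.PosSemidef)
    (β : Fin K → ℝ) (hβ : ∀ k, 0 ≤ β k) (hsum : ∑ k, β k = 1)
    (Th : Fin K → Matrix (Fin N) (Fin N) ℂ)
    (hTh : ∀ k, Th k = T k + ((β k : ℂ)) • R)
    (hcon : (star h ⬝ᵥ ((∑ k, T k) + R) *ᵥ h).re + σ ^ 2
              ≤ (1 + 1 / Γ) * (star h ⬝ᵥ (T i) *ᵥ h).re) :
    (star h ⬝ᵥ (∑ k, Th k) *ᵥ h).re + σ ^ 2
      ≤ (1 + 1 / Γ) * (star h ⬝ᵥ (Th i) *ᵥ h).re := by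
  have hsumTh : ∑ k, Th k = (∑ k, T k) + R := by
    simp only [hTh, Finset.sum_add_distrib, ← Finset.sum_smul]
    congr 1
    have : (∑ k, (β k : ℂ)) = 1 := by
      norm_cast
    rw [this, one_smul]
  rw [hsumTh, hTh i]
  have hRq : 0 ≤ (star h ⬝ᵥ R *ᵥ h).re := by
    have := hR.dotProduct_mulVec_nonneg h
    rw [Complex.le_def] at this
    exact this.1
  have hexp : (star h ⬝ᵥ (T i + (β i : ℂ) • R) *ᵥ h).re
      = (star h ⬝ᵥ (T i) *ᵥ h).re + β i * (star h ⬝ᵥ R *ᵥ h).re := by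
    rw [add_mulVec, dotProduct_add, smul_mulVec, dotProduct_smul]
    simp [Complex.add_re, Complex.mul_re]
  rw [hexp, mul_add]
  have h1 : 0 < 1 + 1 / Γ := by positivity
  nlinarith [mul_nonneg (hβ i) hRq, mul_nonneg h1.le (mul_nonneg (hβ i) hRq)]
end

section
/- Let {T_k}_{k=1}^K be Hermitian PSD matrices and h₁,…,h_K ∈ ℂ^N with h_k^H T_k h_k > 0 for all k. Define t_k = (h_k^H T_k h_k)^{-1/2} T_k h_k, T̄_k = t_k t_k^H, and R̄ = Σ_k T_k - Σ_k T̄_k. Then R̄ is Hermitian positive semidefinite. -/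
open Matrix
open scoped ComplexOrder

private lemma cs_aux {N : ℕ} (T : Matrix (Fin N) (Fin N) ℂ) (hT : T.PosSemidef)
    (x y : Fin N → ℂ) :
    ‖star x ⬝ᵥ T *ᵥ y‖ * ‖star x ⬝ᵥ T *ᵥ y‖
      ≤ (star x ⬝ᵥ T *ᵥ x).re * (star y ⬝ᵥ T *ᵥ y).re := by
  open scoped MatrixOrder in
  obtain ⟨B, rfl⟩ := CStarAlgebra.nonneg_iff_eq_star_mul_self.mp hT.nonneg
  rw [star_eq_conjTranspose]
  have key : ∀ u v : Fin N → ℂ,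
      star u ⬝ᵥ (Bᴴ * B) *ᵥ v = star (B *ᵥ u) ⬝ᵥ (B *ᵥ v) := by
    intro u v
    rw [← Matrix.mulVec_mulVec, Matrix.dotProduct_mulVec, ← Matrix.star_mulVec]
  rw [key, key, key]
  set u : EuclideanSpace ℂ (Fin N) := WithLp.toLp 2 (B *ᵥ x) with hu
  set v : EuclideanSpace ℂ (Fin N) := WithLp.toLp 2 (B *ᵥ y) with hv
  have h1 : star (B *ᵥ x) ⬝ᵥ (B *ᵥ y) = inner ℂ u v := by
    rw [EuclideanSpace.inner_eq_star_dotProduct]; exact dotProduct_comm _ _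
  have h2 : star (B *ᵥ x) ⬝ᵥ (B *ᵥ x) = inner ℂ u u := by
    rw [EuclideanSpace.inner_eq_star_dotProduct]; exact dotProduct_comm _ _
  have h3 : star (B *ᵥ y) ⬝ᵥ (B *ᵥ y) = inner ℂ v v := by
    rw [EuclideanSpace.inner_eq_star_dotProduct]; exact dotProduct_comm _ _
  rw [h1, h2, h3]
  have := inner_mul_inner_self_le (𝕜 := ℂ) u v
  rwa [← norm_inner_symm u v] at this

private lemma quad_form {N : ℕ} (w : Fin N → ℂ) (x : Fin N → ℂ) :
    star x ⬝ᵥ (vecMulVec w (star w)) *ᵥ x = (star x ⬝ᵥ w) * star (star x ⬝ᵥ w) := by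
  simp only [Matrix.vecMulVec, Matrix.mulVec, dotProduct, Matrix.of_apply,
    Finset.mul_sum, Finset.sum_mul, star_sum, star_mul', star_star, Pi.star_apply]
  rw [Finset.sum_comm]
  congr 1; ext i; congr 1; ext j; ring

private lemma rank_one_sub {N : ℕ} (T : Matrix (Fin N) (Fin N) ℂ) (hT : T.PosSemidef)
    (h : Fin N → ℂ) (hpos : 0 < star h ⬝ᵥ T *ᵥ h) :
    (T - vecMulVec (((Real.sqrt ((star h ⬝ᵥ T *ᵥ h).re))⁻¹ : ℂ) • (T *ᵥ h))
      (star (((Real.sqrt ((star h ⬝ᵥ T *ᵥ h).re))⁻¹ : ℂ) • (T *ᵥ h)))).PosSemidef := by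
  set c : ℝ := (star h ⬝ᵥ T *ᵥ h).re with hc
  have hcpos : 0 < c := by
    have := (Complex.lt_def.mp hpos).1
    simpa using this
  set k : ℝ := (Real.sqrt c)⁻¹ with hk
  set t : Fin N → ℂ := ((Real.sqrt c : ℂ))⁻¹ • (T *ᵥ h) with htdef
  have hkc : ((Real.sqrt c : ℂ))⁻¹ = ((k : ℝ) : ℂ) := by
    rw [hk]; push_cast; ring
  refine Matrix.PosSemidef.of_dotProduct_mulVec_nonneg ?_ ?_
  · have h1 : (vecMulVec t (star t)).IsHermitian := by
      ext i j
      simp [Matrix.conjTranspose_apply, Matrix.vecMulVec_apply, mul_comm]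
    exact hT.1.sub h1
  · intro x
    rw [Matrix.sub_mulVec, dotProduct_sub, quad_form]
    set p : ℂ := star x ⬝ᵥ T *ᵥ h with hp
    have hxt : star x ⬝ᵥ t = ((k : ℝ) : ℂ) * p := by
      simp [htdef, dotProduct_smul, smul_eq_mul, hkc]
      exact Or.inl rfl
    rw [hxt]
    have hq0 : 0 ≤ star x ⬝ᵥ T *ᵥ x := hT.dotProduct_mulVec_nonneg x
    set q : ℝ := (star x ⬝ᵥ T *ᵥ x).re with hqdef
    have hqq : star x ⬝ᵥ T *ᵥ x = (q : ℂ) := by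
      rw [Complex.le_def] at hq0
      apply Complex.ext <;> simp [hqdef, ← hq0.2]
    have hcs : ‖p‖ * ‖p‖ ≤ q * c := cs_aux T hT x h
    have e : (((k : ℝ) : ℂ) * p) * star (((k : ℝ) : ℂ) * p)
        = ((k ^ 2 * ‖p‖ ^ 2 : ℝ) : ℂ) := by
      have hs : star (((k : ℝ) : ℂ) * p) = ((k : ℝ) : ℂ) * star p := by
        simp [star_mul', mul_comm, Complex.conj_ofReal]
      rw [hs]
      have hps : p * star p = ((‖p‖ ^ 2 : ℝ) : ℂ) := by
        rw [show star p = (starRingEnd ℂ) p from rfl, Complex.mul_conj]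
        simp [Complex.normSq_eq_norm_sq]
      rw [show (((k : ℝ) : ℂ) * p) * (((k : ℝ) : ℂ) * star p)
            = (((k : ℝ) : ℂ)) ^ 2 * (p * star p) by ring, hps]
      push_cast
      ring
    rw [hqq, e]
    rw [← Complex.ofReal_sub, Complex.zero_le_real, sub_nonneg]
    have hk2 : k ^ 2 = c⁻¹ := by
      rw [hk, ← Real.sqrt_inv, Real.sq_sqrt (by positivity)]
    rw [hk2]
    rw [inv_mul_le_iff₀ hcpos]
    calc ‖p‖ ^ 2 = ‖p‖ * ‖p‖ := sq ‖p‖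
      _ ≤ q * c := hcs
      _ = c * q := mul_comm q c

private lemma psd_sum {n : ℕ} {ι : Type*} (s : Finset ι)
    (f : ι → Matrix (Fin n) (Fin n) ℂ) (hf : ∀ i ∈ s, (f i).PosSemidef) :
    (∑ i ∈ s, f i).PosSemidef := by
  classical
  induction s using Finset.induction_on with
  | empty => simpa using Matrix.PosSemidef.zero
  | insert _ _ hnot ih =>
    rw [Finset.sum_insert hnot]
    exact (hf _ (Finset.mem_insert_self _ _)).add
      (ih fun i hi => hf i (Finset.mem_insert_of_mem hi))

/-- The leftover covariance `R̄ = ∑ₖ Tₖ - ∑ₖ tₖ tₖᴴ`, with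
`tₖ = (hₖᴴ Tₖ hₖ)^{-1/2} Tₖ hₖ`, is Hermitian positive semidefinite. -/
theorem stmt_14 {N K : ℕ} (T : Fin K → Matrix (Fin N) (Fin N) ℂ)
    (h : Fin K → (Fin N → ℂ))
    (hT : ∀ k, (T k).PosSemidef)
    (hpos : ∀ k, 0 < star (h k) ⬝ᵥ (T k) *ᵥ (h k))
    (t : Fin K → (Fin N → ℂ))
    (ht : ∀ k, t k = ((Real.sqrt ((star (h k) ⬝ᵥ (T k) *ᵥ (h k)).re))⁻¹ : ℂ) • ((T k) *ᵥ (h k)))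
    (Rbar : Matrix (Fin N) (Fin N) ℂ)
    (hRbar : Rbar = (∑ k, T k) - ∑ k, vecMulVec (t k) (star (t k))) :
    Rbar.PosSemidef := by
  have : Rbar = ∑ k, (T k - vecMulVec (t k) (star (t k))) := by
    rw [hRbar, Finset.sum_sub_distrib]
  rw [this]
  apply psd_sum
  intro k _
  rw [ht k]
  exact rank_one_sub (T k) (hT k) (h k) (hpos k)
end
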